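/- arXiv:1007.5442 — 2 statements merged into one kernel-verified Lean document; each statement's English description precedes it below -/
import Mathlib

section
/- For every real α with 9 < α ≤ 17 + 12√2, setting β_α = f(α) one has β_α ≥ 17 + 12√2 and: (i) for every real γ with α ≤ γ ≤ β_α, the Sugeno-Weber t-norm T_α dominates T_γ; (ii) for every real δ with β_α < δ < ∞, T_α does not dominate T_δ. -/
open Set

/-- The Sugeno-Weber t-norm with parameter `l`. -/
noncomputable def TSW (l : ℝ) (u v : ℝ) : ℝ :=
  max 0 ((1 - l) * u * v + l * (u + v - 1))

/-- `T₁` dominates `T₂` (on the unit interval). -/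
def Dominates (T₁ T₂ : ℝ → ℝ → ℝ) : Prop :=
  ∀ x y u v : ℝ, x ∈ Icc (0:ℝ) 1 → y ∈ Icc (0:ℝ) 1 → u ∈ Icc (0:ℝ) 1 → v ∈ Icc (0:ℝ) 1 →
    T₁ (T₂ x y) (T₂ u v) ≥ T₂ (T₁ x u) (T₁ y v)

/-- The function `f(x) = ((1 - 3√x)/(3 - √x))²`. -/
noncomputable def f (x : ℝ) : ℝ := ((1 - 3 * Real.sqrt x) / (3 - Real.sqrt x)) ^ 2

/-!
Under `x = 1 - X` the t-norm `TSW l` becomes `1 - min 1 (X + U + (l - 1) X U)`, so dominance of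
t-norms turns into reversed dominance of these t-conorms, whose untruncated form satisfies
`1 + (l - 1) (X + U + (l - 1) X U) = (1 + (l - 1) X) (1 + (l - 1) U)`. The two nested untruncated
t-conorms differ by `(c - a) (XV + YU - (a - 1)(c - 1) XYUV)`. Replacing `X, U, Y, V` by geometric
means reduces the sign of the bracket to the diagonal `X = Y = U = V = g`, where the constraint that
the result stays below `1` forces `(a - 1)(c - 1) g² ≤ 2` exactly when
`(a - 1)(√c - 3)² ≤ 8 (c - 1)`, i.e. `(√a - 3)(√c - 3) ≤ 8`, i.e. `c ≤ f a`. When this fails, a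
diagonal point just beyond `(a - 1)(c - 1) g² = 2` violates dominance.
-/

open Real Filter Topology

def swSum (l X U : ℝ) : ℝ := X + U + (l - 1) * X * U

noncomputable def swConorm (l X U : ℝ) : ℝ := min 1 (swSum l X U)

lemma TSW_one_sub (l X U : ℝ) : TSW l (1 - X) (1 - U) = 1 - swConorm l X U := by
  rw [TSW, swConorm, ← max_sub_sub_left, sub_self, swSum]
  ring_nf

lemma dominates_TSW_iff (a c : ℝ) :
    Dominates (TSW a) (TSW c) ↔ ∀ X Y U V : ℝ, X ∈ Icc (0:ℝ) 1 → Y ∈ Icc (0:ℝ) 1 →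
      U ∈ Icc (0:ℝ) 1 → V ∈ Icc (0:ℝ) 1 →
      swConorm a (swConorm c X Y) (swConorm c U V) ≤
        swConorm c (swConorm a X U) (swConorm a Y V) := by
  constructor
  · intro h X Y U V hX hY hU hV
    have := h _ _ _ _ (Icc.mem_iff_one_sub_mem.1 hX) (Icc.mem_iff_one_sub_mem.1 hY)
      (Icc.mem_iff_one_sub_mem.1 hU) (Icc.mem_iff_one_sub_mem.1 hV)
    simp only [TSW_one_sub] at this
    linarith
  · intro h x y u v hx hy hu hv
    have := h _ _ _ _ (Icc.mem_iff_one_sub_mem.1 hx) (Icc.mem_iff_one_sub_mem.1 hy)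
      (Icc.mem_iff_one_sub_mem.1 hu) (Icc.mem_iff_one_sub_mem.1 hv)
    rw [← sub_sub_cancel 1 x, ← sub_sub_cancel 1 y, ← sub_sub_cancel 1 u,
      ← sub_sub_cancel 1 v]
    simp only [TSW_one_sub]
    linarith

lemma swSum_nonneg {l X U : ℝ} (hl : 1 ≤ l) (hX : 0 ≤ X) (hU : 0 ≤ U) :
    0 ≤ swSum l X U := by
  unfold swSum
  have : 0 ≤ l - 1 := by linarith
  positivity

lemma left_le_swSum {l X U : ℝ} (hl : 1 ≤ l) (hX : 0 ≤ X) (hU : 0 ≤ U) :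
    X ≤ swSum l X U := by
  unfold swSum
  have : 0 ≤ l - 1 := by linarith
  have : 0 ≤ (l - 1) * X * U := by positivity
  linarith

lemma right_le_swSum {l X U : ℝ} (hl : 1 ≤ l) (hX : 0 ≤ X) (hU : 0 ≤ U) :
    U ≤ swSum l X U := by
  unfold swSum
  have : 0 ≤ l - 1 := by linarith
  have : 0 ≤ (l - 1) * X * U := by positivity
  linarith

lemma swSum_mono {l X X' U U' : ℝ} (hl : 1 ≤ l) (hX : 0 ≤ X) (hXX' : X ≤ X') (hU : 0 ≤ U)
    (hUU' : U ≤ U') : swSum l X U ≤ swSum l X' U' := by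
  unfold swSum
  have : 0 ≤ l - 1 := by linarith
  gcongr
  exact mul_nonneg this (hX.trans hXX')

lemma one_add_mul_swSum (l X U : ℝ) :
    1 + (l - 1) * swSum l X U = (1 + (l - 1) * X) * (1 + (l - 1) * U) := by
  unfold swSum; ring

lemma swSum_swSum_sub (a c X Y U V : ℝ) :
    swSum c (swSum a X U) (swSum a Y V) - swSum a (swSum c X Y) (swSum c U V) =
      (c - a) * (X * V + Y * U - (a - 1) * (c - 1) * (X * Y * U * V)) := by
  unfold swSum; ring

lemma swConorm_nonneg {l X U : ℝ} (hl : 1 ≤ l) (hX : 0 ≤ X) (hU : 0 ≤ U) :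
    0 ≤ swConorm l X U :=
  le_min zero_le_one (swSum_nonneg hl hX hU)

lemma swConorm_eq_swSum {l X U : ℝ} (h : swSum l X U ≤ 1) : swConorm l X U = swSum l X U :=
  min_eq_right h

lemma swSum_lt_one_of_swConorm_lt_one {l X U : ℝ} (h : swConorm l X U < 1) : swSum l X U < 1 :=
  (min_lt_iff.1 h).resolve_left (lt_irrefl 1)

lemma add_mul_sq_le_of_sq_le_mul {α β p q t : ℝ} (hα : 0 ≤ α) (hβ : 0 ≤ β) (hp : 0 ≤ p)
    (hq : 0 ≤ q) (h : t ^ 2 ≤ p * q) : (α + β * t) ^ 2 ≤ (α + β * p) * (α + β * q) := by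
  nlinarith [mul_le_mul_of_nonneg_left (two_mul_le_add_of_sq_le_mul hp hq h) (mul_nonneg hα hβ),
    mul_le_mul_of_nonneg_left h (sq_nonneg β)]

lemma mul_mul_sq_le_two {k l g s : ℝ} (hk : 0 ≤ k) (hl : 0 ≤ l) (hg : 0 ≤ g)
    (hcond : k * (s - 3) ^ 2 ≤ 8 * l) (h : 1 + l * (2 * g + k * g ^ 2) ≤ s) :
    k * l * g ^ 2 ≤ 2 := by
  by_contra! H
  have hkl : 0 < k * l := by
    by_contra! hkl
    nlinarith [mul_nonpos_of_nonpos_of_nonneg hkl (sq_nonneg g)]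
  have hk' : 0 < k := lt_of_le_of_ne hk (by rintro rfl; simp at hkl)
  have hsq : (k * (s - 3)) ^ 2 < (2 * k * l * g) ^ 2 := by
    nlinarith [mul_le_mul_of_nonneg_left hcond hk,
      mul_lt_mul_of_pos_left H (mul_pos (by norm_num : (0:ℝ) < 4) hkl)]
  have := lt_of_pow_lt_pow_left₀ 2 (by positivity) hsq
  nlinarith [mul_le_mul_of_nonneg_left h hk, mul_lt_mul_of_pos_left H hk']

lemma mul_le_of_swSum_swSum_le_one {a c X Y U V : ℝ} (ha : 1 ≤ a) (hc : 1 ≤ c)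
    (hcond : (a - 1) * (√c - 3) ^ 2 ≤ 8 * (c - 1)) (hX : 0 ≤ X) (hY : 0 ≤ Y) (hU : 0 ≤ U)
    (hV : 0 ≤ V) (h : swSum c (swSum a X U) (swSum a Y V) ≤ 1) :
    (a - 1) * (c - 1) * (X * Y * U * V) ≤ X * V + Y * U := by
  have hk : 0 ≤ a - 1 := sub_nonneg.2 ha
  have hl : 0 ≤ c - 1 := sub_nonneg.2 hc
  set m := √(X * U)
  set n := √(Y * V)
  set g := √(m * n)
  have hm : 0 ≤ m := sqrt_nonneg _
  have hn : 0 ≤ n := sqrt_nonneg _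
  have hg : 0 ≤ g := sqrt_nonneg _
  have hm2 : m ^ 2 = X * U := sq_sqrt (mul_nonneg hX hU)
  have hn2 : n ^ 2 = Y * V := sq_sqrt (mul_nonneg hY hV)
  have hg2 : g ^ 2 = m * n := sq_sqrt (mul_nonneg hm hn)
  have hXU : 2 * m + (a - 1) * m ^ 2 ≤ swSum a X U := by
    rw [swSum, hm2, mul_assoc]
    linarith [two_mul_le_add_of_sq_le_mul hX hU hm2.le]
  have hYV : 2 * n + (a - 1) * n ^ 2 ≤ swSum a Y V := by
    rw [swSum, hn2, mul_assoc]
    linarith [two_mul_le_add_of_sq_le_mul hY hV hn2.le]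
  have hmn : (2 * g + (a - 1) * g ^ 2) ^ 2 ≤
      (2 * m + (a - 1) * m ^ 2) * (2 * n + (a - 1) * n ^ 2) :=
    calc (2 * g + (a - 1) * g ^ 2) ^ 2 = (m * n) * (2 + (a - 1) * g) ^ 2 := by
          rw [← hg2]; ring
      _ ≤ (m * n) * ((2 + (a - 1) * m) * (2 + (a - 1) * n)) := by
          gcongr
          exact add_mul_sq_le_of_sq_le_mul zero_le_two hk hm hn hg2.le
      _ = (2 * m + (a - 1) * m ^ 2) * (2 * n + (a - 1) * n ^ 2) := by ring
  have hsq : (1 + (c - 1) * (2 * g + (a - 1) * g ^ 2)) ^ 2 ≤ c :=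
    calc (1 + (c - 1) * (2 * g + (a - 1) * g ^ 2)) ^ 2
        ≤ (1 + (c - 1) * (2 * m + (a - 1) * m ^ 2)) * (1 + (c - 1) * (2 * n + (a - 1) * n ^ 2)) :=
          add_mul_sq_le_of_sq_le_mul zero_le_one hl (by positivity) (by positivity) hmn
      _ ≤ (1 + (c - 1) * swSum a X U) * (1 + (c - 1) * swSum a Y V) := by
          gcongr
          exact add_nonneg zero_le_one (mul_nonneg hl ((by positivity : (0:ℝ) ≤ _).trans hXU))
      _ = 1 + (c - 1) * swSum c (swSum a X U) (swSum a Y V) := (one_add_mul_swSum ..).symm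
      _ ≤ c := by nlinarith
  have hklg := mul_mul_sq_le_two hk hl hg hcond (le_sqrt_of_sq_le hsq)
  calc (a - 1) * (c - 1) * (X * Y * U * V) = (a - 1) * (c - 1) * g ^ 2 * (m * n) := by
        rw [hg2]; linear_combination (1 - a) * (c - 1) * (n ^ 2 * hm2 + X * U * hn2)
    _ ≤ 2 * (m * n) := by gcongr
    _ ≤ X * V + Y * U := two_mul_le_add_of_sq_le_mul (mul_nonneg hX hV) (mul_nonneg hY hU)
        (by rw [mul_pow, hm2, hn2]; ring_nf; rfl)

lemma swSum_swSum_le_swSum_swSum {a c X Y U V : ℝ} (ha : 1 ≤ a) (hac : a ≤ c)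
    (hcond : (a - 1) * (√c - 3) ^ 2 ≤ 8 * (c - 1)) (hX : 0 ≤ X) (hY : 0 ≤ Y) (hU : 0 ≤ U)
    (hV : 0 ≤ V) (h : swSum c (swSum a X U) (swSum a Y V) ≤ 1) :
    swSum a (swSum c X Y) (swSum c U V) ≤ swSum c (swSum a X U) (swSum a Y V) := by
  rw [← sub_nonneg, swSum_swSum_sub]
  exact mul_nonneg (sub_nonneg.2 hac)
    (sub_nonneg.2 (mul_le_of_swSum_swSum_le_one ha (ha.trans hac) hcond hX hY hU hV h))

theorem dominates_TSW {a c : ℝ} (ha : 1 ≤ a) (hac : a ≤ c)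
    (hcond : (a - 1) * (√c - 3) ^ 2 ≤ 8 * (c - 1)) : Dominates (TSW a) (TSW c) := by
  rw [dominates_TSW_iff]
  rintro X Y U V ⟨hX, -⟩ ⟨hY, -⟩ ⟨hU, -⟩ ⟨hV, -⟩
  have hc := ha.trans hac
  rcases le_or_gt 1 (swSum c (swConorm a X U) (swConorm a Y V)) with hge | hlt
  · calc swConorm a (swConorm c X Y) (swConorm c U V) ≤ 1 := min_le_left _ _
      _ = swConorm c (swConorm a X U) (swConorm a Y V) := (min_eq_left hge).symm
  have hXU : swSum a X U ≤ 1 := (swSum_lt_one_of_swConorm_lt_one <|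
    (left_le_swSum hc (swConorm_nonneg ha hX hU) (swConorm_nonneg ha hY hV)).trans_lt hlt).le
  have hYV : swSum a Y V ≤ 1 := (swSum_lt_one_of_swConorm_lt_one <|
    (right_le_swSum hc (swConorm_nonneg ha hX hU) (swConorm_nonneg ha hY hV)).trans_lt hlt).le
  rw [swConorm_eq_swSum hXU, swConorm_eq_swSum hYV] at hlt ⊢
  calc swConorm a (swConorm c X Y) (swConorm c U V)
      ≤ swSum a (swConorm c X Y) (swConorm c U V) := min_le_right _ _
    _ ≤ swSum a (swSum c X Y) (swSum c U V) :=
        swSum_mono ha (swConorm_nonneg hc hX hY) (min_le_right _ _) (swConorm_nonneg hc hU hV)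
          (min_le_right _ _)
    _ ≤ swSum c (swSum a X U) (swSum a Y V) :=
        swSum_swSum_le_swSum_swSum ha hac hcond hX hY hU hV hlt.le
    _ = swConorm c (swSum a X U) (swSum a Y V) := (swConorm_eq_swSum hlt.le).symm

lemma exists_swSum_swSum_lt_one {a d : ℝ} (ha : 1 < a) (hd : 9 ≤ d)
    (hcond : 8 * (d - 1) < (a - 1) * (√d - 3) ^ 2) :
    ∃ m, 0 < m ∧ 2 < (a - 1) * (d - 1) * m ^ 2 ∧ swSum d (swSum a m m) (swSum a m m) < 1 := by
  have hk : 0 < a - 1 := by linarith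
  have hl : 0 < d - 1 := by linarith
  set m₀ := √(2 / ((a - 1) * (d - 1)))
  have hm₀ : 0 < m₀ := sqrt_pos.2 (by positivity)
  have hm₀2 : (a - 1) * (d - 1) * m₀ ^ 2 = 2 := by
    rw [sq_sqrt (by positivity)]; field_simp
  have hsd : 3 ≤ √d := le_sqrt_of_sq_le (by linarith)
  have h2lm : 2 * (d - 1) * m₀ < √d - 3 := by
    refine lt_of_pow_lt_pow_left₀ 2 (by linarith) ?_
    nlinarith
  have hlt₀ : swSum d (swSum a m₀ m₀) (swSum a m₀ m₀) < 1 := by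
    have hsq : (1 + (d - 1) * swSum a m₀ m₀) ^ 2 < d := by
      have e : 1 + (d - 1) * swSum a m₀ m₀ = 3 + 2 * (d - 1) * m₀ := by
        unfold swSum; linear_combination hm₀2
      rw [e]
      nlinarith [sq_sqrt (by linarith : (0:ℝ) ≤ d)]
    have := one_add_mul_swSum d (swSum a m₀ m₀) (swSum a m₀ m₀)
    nlinarith
  have hcont : Continuous fun m => swSum d (swSum a m m) (swSum a m m) := by
    unfold swSum; fun_prop
  have hnear : ∀ᶠ m in 𝓝[>] m₀, swSum d (swSum a m m) (swSum a m m) < 1 :=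
    (hcont.continuousAt.eventually_lt continuousAt_const hlt₀).filter_mono nhdsWithin_le_nhds
  obtain ⟨m, hm, hlt⟩ := (eventually_mem_nhdsWithin.and hnear).exists
  refine ⟨m, hm₀.trans hm, ?_, hlt⟩
  rw [← hm₀2]
  gcongr
  exact hm

theorem not_dominates_TSW {a d : ℝ} (ha : 1 < a) (had : a < d) (hd : 9 ≤ d)
    (hcond : 8 * (d - 1) < (a - 1) * (√d - 3) ^ 2) : ¬ Dominates (TSW a) (TSW d) := by
  obtain ⟨m, hm, hklm, hlt⟩ := exists_swSum_swSum_lt_one ha hd hcond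
  have hF : 0 ≤ swSum a m m := swSum_nonneg ha.le hm.le hm.le
  have hF1 : swSum a m m < 1 := (left_le_swSum (ha.trans had).le hF hF).trans_lt hlt
  have hm1 : m ≤ 1 := (left_le_swSum ha.le hm.le hm.le).trans hF1.le
  rw [dominates_TSW_iff]
  intro h
  have hdom := h m m m m ⟨hm.le, hm1⟩ ⟨hm.le, hm1⟩ ⟨hm.le, hm1⟩ ⟨hm.le, hm1⟩
  rw [swConorm_eq_swSum hF1.le, swConorm_eq_swSum hlt.le] at hdom
  refine hdom.not_gt (lt_min hlt ?_)
  rcases le_total 1 (swSum d m m) with hG | hG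
  · have : swSum a 1 1 = a + 1 := by unfold swSum; ring
    rw [show swConorm d m m = 1 from min_eq_left hG, this]
    linarith
  · rw [swConorm_eq_swSum hG, ← sub_neg, swSum_swSum_sub]
    exact mul_neg_of_pos_of_neg (sub_pos.2 had)
      (by nlinarith [mul_lt_mul_of_pos_left hklm (mul_pos hm hm)])

lemma le_f_iff {a c : ℝ} (ha : 9 < a) : c ≤ f a ↔ (√a - 3) * (√c - 3) ≤ 8 := by
  have hsa : 3 < √a := lt_sqrt_of_sq_lt (by linarith)
  have hfa : f a = ((3 * √a - 1) / (√a - 3)) ^ 2 := by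
    rw [f, ← neg_div_neg_eq]; ring_nf
  rw [hfa, ← sqrt_le_left (by apply div_nonneg <;> linarith), le_div_iff₀ (by linarith)]
  constructor <;> intro h <;> linarith

lemma sub_one_mul_sq_le_iff {a c : ℝ} (ha : 0 ≤ a) (hc : 9 ≤ c) :
    (a - 1) * (√c - 3) ^ 2 ≤ 8 * (c - 1) ↔ (√a - 3) * (√c - 3) ≤ 8 := by
  have hsc : 3 ≤ √c := le_sqrt_of_sq_le (by linarith)
  have e : (3 * √c - 1) ^ 2 - (√a * (√c - 3)) ^ 2 =
      8 * (c - 1) - (a - 1) * (√c - 3) ^ 2 := by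
    rw [mul_pow, sq_sqrt ha]; linear_combination 8 * sq_sqrt (by linarith : (0:ℝ) ≤ c)
  rw [← sub_nonneg, ← e, sub_nonneg,
    pow_le_pow_iff_left₀ (by positivity) (by linarith) two_ne_zero]
  constructor <;> intro h <;> linarith

theorem sugeno_weber_dominance_interval (a : ℝ) (ha : 9 < a)
    (ha' : a ≤ 17 + 12 * Real.sqrt 2) :
    17 + 12 * Real.sqrt 2 ≤ f a ∧
    (∀ c : ℝ, a ≤ c → c ≤ f a → Dominates (TSW a) (TSW c)) ∧
    (∀ d : ℝ, f a < d → ¬ Dominates (TSW a) (TSW d)) := by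
  have h2 : √2 ^ 2 = 2 := sq_sqrt zero_le_two
  have hsq : 17 + 12 * √2 = (3 + 2 * √2) ^ 2 := by linear_combination -4 * h2
  have hfa : 17 + 12 * √2 ≤ f a := by
    have hsa : √a ≤ 3 + 2 * √2 := by
      rw [sqrt_le_left (by positivity), ← hsq]; exact ha'
    rw [le_f_iff ha, hsq, sqrt_sq (by positivity)]
    nlinarith [sqrt_nonneg 2]
  have h9 : 9 < f a := by linarith [sqrt_nonneg 2]
  refine ⟨hfa, fun c hac hcf => ?_, fun d hfd => ?_⟩
  · refine dominates_TSW (by linarith) hac ?_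
    rw [sub_one_mul_sq_le_iff (by linarith) (by linarith)]
    exact (le_f_iff ha).1 hcf
  · refine not_dominates_TSW (by linarith) (by linarith) (by linarith) ?_
    rw [← not_le, sub_one_mul_sq_le_iff (by linarith) (by linarith), ← le_f_iff ha, not_le]
    exact hfd
end

section
/- Let 0 < λ < μ < ∞ be real numbers. Then the Sugeno-Weber t-norm T_λ dominates the Sugeno-Weber t-norm T_μ if and only if for all real numbers x, y, u, ṽ with 0 < x < 1, 0 < y < 1, 0 < u < 1 and y < ṽ < 1 + λy, at least one of the following two inequalities holds: u((λ−1)x + 1)((μ−1)ṽ + 1) + (μ−1)ṽx + ṽ + x − 1 ≥ 0, or ṽx(1 − (λ−1)(μ−1)uy) + y((λ−1)uy((μ−1)x + 1) + u − x) ≥ 0. -/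
open Set

/-!
Write `T_t = max 0 P_t` with `P_t a b = a b - t (1 - a) (1 - b)`. At a point `(X, Y, U, V)` of the
cube, dominance of `T_m` by `T_l` is equivalent to
`P_m (P_l X U) (P_l Y V) ≤ max 0 (P_l (P_m X Y) (P_m U V))`: as soon as one side is positive, all
inner values are positive, because `P_t` is monotone on `[0, 1]²` and is positive on `[-t, 1]²`
only where both arguments are. With `x = 1 - X`, `y = 1 - Y`, `u = 1 - U` and
`w = 1 - P_l Y V`, which maps `V ∈ (0, 1)` onto `w ∈ (y, 1 + l y)`, the first polynomial of the
reduced condition is `-P_m (P_l X U) (P_l Y V)`, and the second one is the difference of the two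
nested polynomials times the positive factor `(1 + (l - 1) y) / (m - l)`. Finally, dominance on
the closed cube follows from the open cube by continuity.
-/
def swPoly (t a b : ℝ) : ℝ := a * b - t * (1 - a) * (1 - b)

lemma TSW_eq_max_swPoly (t a b : ℝ) : TSW t a b = max 0 (swPoly t a b) := by
  unfold TSW swPoly; ring_nf

lemma continuous_TSW (t : ℝ) : Continuous (Function.uncurry (TSW t)) := by
  unfold TSW; fun_prop

lemma dominates_iff_forall_Ioo {T₁ T₂ : ℝ → ℝ → ℝ}
    (h₁ : Continuous (Function.uncurry T₁)) (h₂ : Continuous (Function.uncurry T₂)) :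
    Dominates T₁ T₂ ↔ ∀ x y u v : ℝ, x ∈ Ioo (0:ℝ) 1 → y ∈ Ioo (0:ℝ) 1 →
      u ∈ Ioo (0:ℝ) 1 → v ∈ Ioo (0:ℝ) 1 → T₁ (T₂ x y) (T₂ u v) ≥ T₂ (T₁ x u) (T₁ y v) := by
  refine ⟨fun h x y u v hx hy hu hv ↦
    h x y u v (Ioo_subset_Icc_self hx) (Ioo_subset_Icc_self hy) (Ioo_subset_Icc_self hu)
      (Ioo_subset_Icc_self hv), fun h x y u v hx hy hu hv ↦ ?_⟩
  let I : Set ℝ := Ioo 0 1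
  have hI : closure I = Icc 0 1 := closure_Ioo zero_ne_one
  have hT₁ {f g : ℝ × ℝ × ℝ × ℝ → ℝ} (hf : Continuous f) (hg : Continuous g) :
      Continuous fun p ↦ T₁ (f p) (g p) := h₁.comp (hf.prodMk hg)
  have hT₂ {f g : ℝ × ℝ × ℝ × ℝ → ℝ} (hf : Continuous f) (hg : Continuous g) :
      Continuous fun p ↦ T₂ (f p) (g p) := h₂.comp (hf.prodMk hg)
  have hclosed : IsClosed {p : ℝ × ℝ × ℝ × ℝ |
      T₂ (T₁ p.1 p.2.2.1) (T₁ p.2.1 p.2.2.2) ≤ T₁ (T₂ p.1 p.2.1) (T₂ p.2.2.1 p.2.2.2)} :=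
    isClosed_le (hT₂ (hT₁ (by fun_prop) (by fun_prop)) (hT₁ (by fun_prop) (by fun_prop)))
      (hT₁ (hT₂ (by fun_prop) (by fun_prop)) (hT₂ (by fun_prop) (by fun_prop)))
  have hsub := closure_minimal (s := I ×ˢ I ×ˢ I ×ˢ I)
    (fun p ⟨hx, hy, hu, hv⟩ ↦ h _ _ _ _ hx hy hu hv) hclosed
  simp only [closure_prod_eq, hI] at hsub
  exact @hsub (x, y, u, v) ⟨hx, hy, hu, hv⟩

section swPoly

variable {t a b a' b' : ℝ}

lemma swPoly_comm (t a b : ℝ) : swPoly t a b = swPoly t b a := by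
  unfold swPoly; ring

lemma swPoly_le_mul (ht : 0 ≤ t) (ha : a ≤ 1) (hb : b ≤ 1) : swPoly t a b ≤ a * b := by
  unfold swPoly
  nlinarith [mul_nonneg (mul_nonneg ht (sub_nonneg.2 ha)) (sub_nonneg.2 hb)]

lemma swPoly_le_left (ht : 0 ≤ t) (ha : a ∈ Icc (0:ℝ) 1) (hb : b ∈ Icc (0:ℝ) 1) :
    swPoly t a b ≤ a :=
  (swPoly_le_mul ht ha.2 hb.2).trans (mul_le_of_le_one_right ha.1 hb.2)

lemma swPoly_le_right (ht : 0 ≤ t) (ha : a ∈ Icc (0:ℝ) 1) (hb : b ∈ Icc (0:ℝ) 1) :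
    swPoly t a b ≤ b :=
  swPoly_comm t a b ▸ swPoly_le_left ht hb ha

lemma swPoly_mem_Icc (ht : 0 ≤ t) (ha : a ∈ Icc (0:ℝ) 1) (hb : b ∈ Icc (0:ℝ) 1) :
    swPoly t a b ∈ Icc (-t) 1 := by
  refine ⟨?_, (swPoly_le_left ht ha hb).trans ha.2⟩
  unfold swPoly
  nlinarith [mul_nonneg ha.1 hb.1, mul_nonneg ht (mul_nonneg ha.1 (sub_nonneg.2 hb.2)),
    mul_nonneg ht hb.1]

lemma swPoly_le_swPoly (ht : 0 ≤ t) (ha : a ≤ a') (hb : b ≤ b')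
    (ha' : a' ∈ Icc (0:ℝ) 1) (hb₀ : b ∈ Icc (0:ℝ) 1) : swPoly t a b ≤ swPoly t a' b' := by
  have hdiff : swPoly t a' b' - swPoly t a b
      = (b' - b) * (a' + t * (1 - a')) + (a' - a) * (b + t * (1 - b)) := by
    unfold swPoly; ring
  have h₁ : 0 ≤ a' + t * (1 - a') := by nlinarith [ha'.1, mul_nonneg ht (sub_nonneg.2 ha'.2)]
  have h₂ : 0 ≤ b + t * (1 - b) := by nlinarith [hb₀.1, mul_nonneg ht (sub_nonneg.2 hb₀.2)]
  nlinarith [mul_nonneg (sub_nonneg.2 hb) h₁, mul_nonneg (sub_nonneg.2 ha) h₂]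

lemma pos_of_swPoly_pos (ht : 0 ≤ t) (ha : a ∈ Icc (-t) 1) (hb : b ∈ Icc (-t) 1)
    (h : 0 < swPoly t a b) : 0 < a ∧ 0 < b := by
  have hleft {a b : ℝ} (ha : a ∈ Icc (-t) 1) (hb : b ∈ Icc (-t) 1) (h : 0 < swPoly t a b) :
      0 < a := by
    by_contra! ha₀
    unfold swPoly at h
    rcases le_or_gt 0 b with hb₀ | hb₀
    · nlinarith [mul_nonneg (sub_nonneg.2 ha.2) (sub_nonneg.2 hb.2),
        mul_nonpos_of_nonpos_of_nonneg ha₀ hb₀]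
    · nlinarith [mul_nonneg (neg_nonneg.2 ha₀) (neg_nonneg.2 hb₀.le),
        mul_le_mul_of_nonneg_right (neg_le.1 ha.1) (neg_nonneg.2 hb₀.le),
        mul_nonneg (mul_nonneg ht (neg_nonneg.2 ha₀)) (sub_nonneg.2 hb.2)]
  exact ⟨hleft ha hb h, hleft hb ha (swPoly_comm t a b ▸ h)⟩

end swPoly

lemma TSW_dominance_iff {l m X Y U V : ℝ} (hl : 0 ≤ l) (hlm : l ≤ m)
    (hX : X ∈ Icc (0:ℝ) 1) (hY : Y ∈ Icc (0:ℝ) 1) (hU : U ∈ Icc (0:ℝ) 1)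
    (hV : V ∈ Icc (0:ℝ) 1) :
    TSW m (TSW l X U) (TSW l Y V) ≤ TSW l (TSW m X Y) (TSW m U V) ↔
      swPoly m (swPoly l X U) (swPoly l Y V)
        ≤ max 0 (swPoly l (swPoly m X Y) (swPoly m U V)) := by
  have hm : 0 ≤ m := hl.trans hlm
  have hpos {a : ℝ} (h : 0 < max 0 a) : 0 < a := by simpa [lt_max_iff] using h
  have hmax {s t a b : ℝ} (hs : 0 ≤ s) (ht : 0 ≤ t) (ha : a ∈ Icc (0:ℝ) 1)
      (hb : b ∈ Icc (0:ℝ) 1) : max 0 (swPoly t a b) ∈ Icc (-s) 1 :=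
    ⟨(neg_nonpos.2 hs).trans (le_max_left _ _), max_le zero_le_one (swPoly_mem_Icc ht ha hb).2⟩
  simp only [TSW_eq_max_swPoly]
  constructor
  · intro h
    rcases le_or_gt (swPoly m (swPoly l X U) (swPoly l Y V)) 0 with hR | hR
    · exact le_max_of_le_left hR
    have hmem {a b : ℝ} (ha : a ∈ Icc (0:ℝ) 1) (hb : b ∈ Icc (0:ℝ) 1) :
        swPoly l a b ∈ Icc (-m) 1 :=
      ⟨(neg_le_neg hlm).trans (swPoly_mem_Icc hl ha hb).1, (swPoly_mem_Icc hl ha hb).2⟩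
    obtain ⟨hc, hd⟩ := pos_of_swPoly_pos hm (hmem hX hU) (hmem hY hV) hR
    rw [max_eq_right hc.le, max_eq_right hd.le, max_eq_right hR.le] at h
    obtain ⟨hPa, hPb⟩ :=
      pos_of_swPoly_pos hl (hmax hl hm hX hY) (hmax hl hm hU hV) (hpos (hR.trans_le h))
    rwa [max_eq_right (hpos hPa).le, max_eq_right (hpos hPb).le] at h
  · intro h
    rcases le_or_gt (swPoly m (max 0 (swPoly l X U)) (max 0 (swPoly l Y V))) 0 with hR | hR
    · rw [max_eq_left hR]
      exact le_max_left _ _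
    obtain ⟨hc, hd⟩ := pos_of_swPoly_pos hm (hmax hm hl hX hU) (hmax hm hl hY hV) hR
    rw [max_eq_right (hpos hc).le, max_eq_right (hpos hd).le] at hR ⊢
    have hd₁ : swPoly l Y V ∈ Icc (0:ℝ) 1 := ⟨(hpos hd).le, (swPoly_mem_Icc hl hY hV).2⟩
    have hPa : swPoly m (swPoly l X U) (swPoly l Y V) ≤ swPoly m X Y :=
      swPoly_le_swPoly hm (swPoly_le_left hl hX hU) (swPoly_le_left hl hY hV) hX hd₁
    have hPb : swPoly m (swPoly l X U) (swPoly l Y V) ≤ swPoly m U V :=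
      swPoly_le_swPoly hm (swPoly_le_right hl hX hU) (swPoly_le_right hl hY hV) hU hd₁
    rwa [max_eq_right hR.le, max_eq_right (hR.trans_le hPa).le,
      max_eq_right (hR.trans_le hPb).le]

lemma reduced_first_eq (l m x u w : ℝ) :
    u * ((l - 1) * x + 1) * ((m - 1) * w + 1) + (m - 1) * w * x + w + x - 1
      = -swPoly m (swPoly l (1 - x) (1 - u)) (1 - w) := by
  unfold swPoly; ring

section reduced

variable {l m x y u w V : ℝ}

lemma reduced_second_eq (hw : swPoly l (1 - y) V = 1 - w) :
    (1 + (l - 1) * y) * (swPoly l (swPoly m (1 - x) (1 - y)) (swPoly m (1 - u) V)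
        - swPoly m (swPoly l (1 - x) (1 - u)) (swPoly l (1 - y) V))
      = (m - l) * (w * x * (1 - (l - 1) * (m - 1) * u * y)
          + y * ((l - 1) * u * y * ((m - 1) * x + 1) + u - x)) := by
  unfold swPoly at hw ⊢
  linear_combination
    ((l - m) * x + (m - l - m ^ 2 + l * m ^ 2 + l ^ 2 - l ^ 2 * m) * x * y * u) * hw

lemma reduced_alternatives_iff (hl : 0 ≤ l) (hlm : l < m) (hy₀ : 0 ≤ y) (hy₁ : y < 1)
    (hw : swPoly l (1 - y) V = 1 - w) :
    (u * ((l - 1) * x + 1) * ((m - 1) * w + 1) + (m - 1) * w * x + w + x - 1 ≥ 0 ∨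
      w * x * (1 - (l - 1) * (m - 1) * u * y)
        + y * ((l - 1) * u * y * ((m - 1) * x + 1) + u - x) ≥ 0) ↔
      swPoly m (swPoly l (1 - x) (1 - u)) (swPoly l (1 - y) V)
        ≤ max 0 (swPoly l (swPoly m (1 - x) (1 - y)) (swPoly m (1 - u) V)) := by
  have hK : 0 < 1 + (l - 1) * y := by nlinarith
  rw [le_max_iff, reduced_first_eq, ← hw, ge_iff_le, ge_iff_le, neg_nonneg,
    ← mul_nonneg_iff_of_pos_left (sub_pos.2 hlm), ← reduced_second_eq hw,
    mul_nonneg_iff_of_pos_left hK, sub_nonneg]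

lemma mem_Ioo_iff_exists_swPoly_eq (hl : 0 < l) (hy₀ : 0 ≤ y) (hy₁ : y < 1) :
    w ∈ Ioo y (1 + l * y) ↔ ∃ V ∈ Ioo (0:ℝ) 1, swPoly l (1 - y) V = 1 - w := by
  have hK : 0 < 1 + (l - 1) * y := by nlinarith
  constructor
  · rintro ⟨hyw, hw⟩
    refine ⟨(1 - w + l * y) / (1 + (l - 1) * y),
      ⟨div_pos (by linarith) hK, (div_lt_one hK).2 (by linarith)⟩, ?_⟩
    have hKV := mul_div_cancel₀ (1 - w + l * y) hK.ne'
    unfold swPoly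
    linear_combination hKV
  · rintro ⟨V, ⟨hV₀, hV₁⟩, hw⟩
    unfold swPoly at hw
    constructor <;> nlinarith [mul_pos hK hV₀, mul_pos hK (sub_pos.2 hV₁)]

end reduced

theorem sugeno_weber_dominance_iff_reduced (l m : ℝ) (hl : 0 < l) (hlm : l < m) :
    Dominates (TSW l) (TSW m) ↔
      ∀ x y u w : ℝ, 0 < x → x < 1 → 0 < y → y < 1 → 0 < u → u < 1 →
        y < w → w < 1 + l * y →
        (u * ((l - 1) * x + 1) * ((m - 1) * w + 1) + (m - 1) * w * x + w + x - 1 ≥ 0 ∨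
         w * x * (1 - (l - 1) * (m - 1) * u * y)
           + y * ((l - 1) * u * y * ((m - 1) * x + 1) + u - x) ≥ 0) := by
  have hflip {a : ℝ} (ha : a ∈ Ioo (0:ℝ) 1) : 1 - a ∈ Ioo (0:ℝ) 1 :=
    ⟨by linarith [ha.2], by linarith [ha.1]⟩
  rw [dominates_iff_forall_Ioo (continuous_TSW l) (continuous_TSW m)]
  constructor
  · intro hdom x y u w hx₀ hx₁ hy₀ hy₁ hu₀ hu₁ hyw hw
    obtain ⟨V, hV, hd⟩ := (mem_Ioo_iff_exists_swPoly_eq hl hy₀.le hy₁).1 ⟨hyw, hw⟩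
    have hX := hflip ⟨hx₀, hx₁⟩
    have hY := hflip ⟨hy₀, hy₁⟩
    have hU := hflip ⟨hu₀, hu₁⟩
    rw [reduced_alternatives_iff hl.le hlm hy₀.le hy₁ hd, ← TSW_dominance_iff hl.le hlm.le
      (Ioo_subset_Icc_self hX) (Ioo_subset_Icc_self hY) (Ioo_subset_Icc_self hU)
      (Ioo_subset_Icc_self hV)]
    exact hdom _ _ _ _ hX hY hU hV
  · intro hred X Y U V hX hY hU hV
    have hy := hflip hY
    have hd : swPoly l (1 - (1 - Y)) V = 1 - (1 - swPoly l Y V) := by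
      rw [sub_sub_cancel, sub_sub_cancel]
    obtain ⟨hyw, hw⟩ := (mem_Ioo_iff_exists_swPoly_eq hl hy.1.le hy.2).2 ⟨V, hV, hd⟩
    have h := hred _ _ _ _ (hflip hX).1 (hflip hX).2 hy.1 hy.2 (hflip hU).1 (hflip hU).2
      hyw hw
    rw [reduced_alternatives_iff hl.le hlm hy.1.le hy.2 hd] at h
    simp only [sub_sub_cancel] at h
    exact (TSW_dominance_iff hl.le hlm.le (Ioo_subset_Icc_self hX) (Ioo_subset_Icc_self hY)
      (Ioo_subset_Icc_self hU) (Ioo_subset_Icc_self hV)).2 h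
end
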